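/- Let 𝒱 = {v_1, …, v_n} be nonempty closed subsets of ℝ³ (EuclideanSpace ℝ (Fin 3)) with union 𝒪_𝒱, let v^l_1, …, v^l_m be nonempty closed sets with attachment map σ : {1,…,m} → {1,…,n} such that v^l_j ∩ v_{σ(j)} ≠ ∅ for each j, and let f : ℝ → ℝ be a shaping function with f(t) > 0 for all t > 0. Then the occupied space of the interpolated collision constraint at the endpoint values of α satisfies: at α = 0, {x | min(SDF_𝒱(x), SDF^0_{v_{σ(1)}→v^l_1}(x), …, SDF^0_{v_{σ(m)}→v^l_m}(x)) ≤ 0} = 𝒪_𝒱, and at α = 1, {x | min(SDF_𝒱(x), SDF^1_{v_{σ(1)}→v^l_1}(x), …, SDF^1_{v_{σ(m)}→v^l_m}(x)) ≤ 0} = 𝒪_𝒱 ∪ v^l_1 ∪ ⋯ ∪ v^l_m. -/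

import Mathlib

/-! For a nonempty closed set `w`, `SDF_w x ≤ 0` holds exactly on `w`, and a shaping function
that is positive on `(0, ∞)` preserves this sign condition. So the sublevel set `{· ≤ 0}` of the
minimum is the union of the underlying sets: at `α = 0` the extra terms contribute the sets
`v (σ j)`, already contained in `𝒪_𝒱`, and at `α = 1` the leaf sets `vl j`. -/

/-- Signed distance function of a set `v`. -/
noncomputable def sdf (v : Set (EuclideanSpace ℝ (Fin 3)))
    (x : EuclideanSpace ℝ (Fin 3)) : ℝ :=
  Metric.infDist x v - Metric.infDist x vᶜ

open Metric in
theorem infDist_sub_infDist_compl_nonpos_iff {α : Type*} [PseudoMetricSpace α] {s : Set α}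
    (hcl : IsClosed s) (hne : s.Nonempty) {x : α} :
    infDist x s - infDist x sᶜ ≤ 0 ↔ x ∈ s := by
  by_cases hx : x ∈ s
  · simp [hx, infDist_zero_of_mem hx, infDist_nonneg]
  · have hpos : 0 < infDist x s := (hcl.notMem_iff_infDist_pos hne).1 hx
    simp [hx, infDist_zero_of_mem (Set.mem_compl hx), hpos]

theorem sdf_nonpos_iff {v : Set (EuclideanSpace ℝ (Fin 3))} (hcl : IsClosed v)
    (hne : v.Nonempty) {x : EuclideanSpace ℝ (Fin 3)} : sdf v x ≤ 0 ↔ x ∈ v :=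
  infDist_sub_infDist_compl_nonpos_iff hcl hne

theorem Monotone.map_nonpos_iff {f : ℝ → ℝ} (hf : Monotone f) (hf0 : f 0 = 0)
    (hfpos : ∀ t : ℝ, 0 < t → 0 < f t) {t : ℝ} : f t ≤ 0 ↔ t ≤ 0 :=
  ⟨fun h => not_lt.1 fun ht => (hfpos t ht).not_ge h, fun h => hf0 ▸ hf h⟩

theorem setOf_min_inf'_le_eq_union {X α ι κ : Type*} [LinearOrder α] [Fintype ι] [Fintype κ]
    (Hι : (Finset.univ : Finset ι).Nonempty) (Hκ : (Finset.univ : Finset κ).Nonempty)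
    {g : ι → X → α} {h : κ → X → α} {c : α} {S : ι → Set X} {T : κ → Set X}
    (hg : ∀ i x, g i x ≤ c ↔ x ∈ S i) (hh : ∀ j x, h j x ≤ c ↔ x ∈ T j) :
    {x | min (Finset.univ.inf' Hι fun i => g i x) (Finset.univ.inf' Hκ fun j => h j x) ≤ c} =
      (⋃ i, S i) ∪ ⋃ j, T j := by
  ext x
  simp [Finset.inf'_le_iff, hg, hh]

theorem occupied_space_interpolated_constraint_endpoints_general {n m : ℕ}
    (hn : 0 < n) (hm : 0 < m)
    (v : Fin n → Set (EuclideanSpace ℝ (Fin 3)))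
    (hvne : ∀ i, (v i).Nonempty) (hvcl : ∀ i, IsClosed (v i))
    (vl : Fin m → Set (EuclideanSpace ℝ (Fin 3)))
    (hlne : ∀ j, (vl j).Nonempty) (hlcl : ∀ j, IsClosed (vl j))
    (σ : Fin m → Fin n)
    (f : ℝ → ℝ) (hf0 : f 0 = 0) (hfmono : Monotone f)
    (hfpos : ∀ t : ℝ, 0 < t → 0 < f t) :
    {x | min (Finset.univ.inf' ⟨⟨0, hn⟩, Finset.mem_univ _⟩ fun i => sdf (v i) x)
          (Finset.univ.inf' ⟨⟨0, hm⟩, Finset.mem_univ _⟩ fun j =>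
            (1 - (0:ℝ)) * f (sdf (v (σ j)) x) + (0:ℝ) * f (sdf (vl j) x)) ≤ 0}
      = (⋃ i, v i) ∧
    {x | min (Finset.univ.inf' ⟨⟨0, hn⟩, Finset.mem_univ _⟩ fun i => sdf (v i) x)
          (Finset.univ.inf' ⟨⟨0, hm⟩, Finset.mem_univ _⟩ fun j =>
            (1 - (1:ℝ)) * f (sdf (v (σ j)) x) + (1:ℝ) * f (sdf (vl j) x)) ≤ 0}
      = (⋃ i, v i) ∪ ⋃ j, vl j := by
  have hv (i) (x) : sdf (v i) x ≤ 0 ↔ x ∈ v i := sdf_nonpos_iff (hvcl i) (hvne i)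
  have hshaped {w : Set (EuclideanSpace ℝ (Fin 3))} (hcl : IsClosed w) (hne : w.Nonempty) (x) :
      f (sdf w x) ≤ 0 ↔ x ∈ w :=
    (hfmono.map_nonpos_iff hf0 hfpos).trans (sdf_nonpos_iff hcl hne)
  constructor
  · refine (setOf_min_inf'_le_eq_union _ _ hv (T := fun j => v (σ j))
      fun j x => by simpa using hshaped (hvcl (σ j)) (hvne (σ j)) x).trans ?_
    exact Set.union_eq_left.2 (Set.iUnion_subset fun j => Set.subset_iUnion v (σ j))
  · exact setOf_min_inf'_le_eq_union _ _ hv fun j x => by simpa using hshaped (hlcl j) (hlne j) x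

/-- Endpoint behaviour of the interpolated collision constraint: for nonempty closed
sets `v 0, …, v (n-1)` and nonempty closed leaf objects `vl 0, …, vl (m-1)`, each
intersecting its attached `v (σ j)`, and a shaping function `f` with `f t > 0` for
`t > 0`, the occupied space of
`min(SDF_𝒱, SDF^α_{v (σ 0) → vl 0}, …, SDF^α_{v (σ (m-1)) → vl (m-1)})`
equals `𝒪_𝒱 = ⋃ i, v i` at `α = 0`, and `𝒪_𝒱 ∪ vl 0 ∪ ⋯ ∪ vl (m-1)` at `α = 1`. -/
theorem occupied_space_interpolated_constraint_endpoints {n m : ℕ}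
    (hn : 0 < n) (hm : 0 < m)
    (v : Fin n → Set (EuclideanSpace ℝ (Fin 3)))
    (hvne : ∀ i, (v i).Nonempty) (hvcl : ∀ i, IsClosed (v i))
    (vl : Fin m → Set (EuclideanSpace ℝ (Fin 3)))
    (hlne : ∀ j, (vl j).Nonempty) (hlcl : ∀ j, IsClosed (vl j))
    (σ : Fin m → Fin n)
    (hattach : ∀ j, (vl j ∩ v (σ j)).Nonempty)
    (f : ℝ → ℝ) (hf0 : f 0 = 0) (hfmono : Monotone f)
    (hfconv : ConvexOn ℝ Set.univ f) (hfpos : ∀ t : ℝ, 0 < t → 0 < f t) :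
    {x | min (Finset.univ.inf' ⟨⟨0, hn⟩, Finset.mem_univ _⟩ fun i => sdf (v i) x)
          (Finset.univ.inf' ⟨⟨0, hm⟩, Finset.mem_univ _⟩ fun j =>
            (1 - (0:ℝ)) * f (sdf (v (σ j)) x) + (0:ℝ) * f (sdf (vl j) x)) ≤ 0}
      = (⋃ i, v i) ∧
    {x | min (Finset.univ.inf' ⟨⟨0, hn⟩, Finset.mem_univ _⟩ fun i => sdf (v i) x)
          (Finset.univ.inf' ⟨⟨0, hm⟩, Finset.mem_univ _⟩ fun j =>
            (1 - (1:ℝ)) * f (sdf (v (σ j)) x) + (1:ℝ) * f (sdf (vl j) x)) ≤ 0}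
      = (⋃ i, v i) ∪ ⋃ j, vl j :=
  occupied_space_interpolated_constraint_endpoints_general hn hm v hvne hvcl vl hlne hlcl σ f hf0
    hfmono hfpos
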